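/- arXiv:1511.01340 — 3 statements merged into one kernel-verified Lean document; each statement's English description precedes it below -/
import Mathlib

section
/- Under the stated setup, if |a| ≤ 1 and |b| > 1 (one focus inside and one outside the unit circle), then the contact point ζ₃ lies on the hyperbola with foci a and b: | |ζ₃ − a| − |ζ₃ − b| | = |1 − conj(a)·b|. -/
open Complex ComplexConjugate

/-!
With `w = (z₃ - z₁)(z₃ - z₂) - (z₃ - a)(z₃ - b)`, partial fractions give
`(ζ₃ - a) w = (z₁ - a)(z₂ - a)(b - z₃)` and `(ζ₃ - b) w = (z₁ - b)(z₂ - b)(a - z₃)`, while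
evaluating the cubic at `a` and `b` gives `|z₁ - a||z₂ - a||z₃ - a| = (1 - |a|²)|1 - āb|` and
`|z₁ - b||z₂ - b||z₃ - b| = (|b|² - 1)|1 - āb|`. As `(z₃ - z₁)(z₃ - z₂)` is the derivative of the
cubic at its root `z₃` and `|z₃| = 1`, the number `w · conj (z₃ - a) · conj (z₃ - b)` is the real
`(1 - |a|²)|z₃ - b|² + (1 - |b|²)|z₃ - a|²`. Hence `(|ζ₃ - a| - |ζ₃ - b|) |w| |z₃ - a| |z₃ - b|` is
`|1 - āb|` times that real number, whose absolute value is `|w| |z₃ - a| |z₃ - b|`.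
-/

section ContactPoint

variable {K : Type*} [Field K] {a b z₁ z₂ z₃ : K}

def tangentWeight (a b x y z : K) : K := (x - a) * (x - b) / ((x - y) * (x - z))

def contactDenom (a b z₁ z₂ z₃ : K) : K := (z₃ - z₁) * (z₃ - z₂) - (z₃ - a) * (z₃ - b)

def contactPoint (a b z₁ z₂ z₃ : K) : K :=
  (tangentWeight a b z₁ z₂ z₃ * z₂ + tangentWeight a b z₂ z₁ z₃ * z₁) /
    (tangentWeight a b z₁ z₂ z₃ + tangentWeight a b z₂ z₁ z₃)

lemma contactPoint_comm (a b z₁ z₂ z₃ : K) :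
    contactPoint a b z₁ z₂ z₃ = contactPoint b a z₁ z₂ z₃ := by
  simp only [contactPoint, tangentWeight, mul_comm (z₁ - a), mul_comm (z₂ - a)]

lemma contactDenom_comm (a b z₁ z₂ z₃ : K) :
    contactDenom a b z₁ z₂ z₃ = contactDenom b a z₁ z₂ z₃ := by
  rw [contactDenom, contactDenom, mul_comm (z₃ - a)]

variable (h12 : z₁ ≠ z₂) (h13 : z₁ ≠ z₃) (h23 : z₂ ≠ z₃)
include h12 h13 h23

lemma tangentWeight_add_tangentWeight :
    tangentWeight a b z₁ z₂ z₃ + tangentWeight a b z₂ z₁ z₃ =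
      contactDenom a b z₁ z₂ z₃ / ((z₃ - z₁) * (z₃ - z₂)) := by
  unfold tangentWeight contactDenom
  field_simp
  ring

lemma contactPoint_sub_left (hw : contactDenom a b z₁ z₂ z₃ ≠ 0) :
    contactPoint a b z₁ z₂ z₃ - a =
      (z₁ - a) * (z₂ - a) * (b - z₃) / contactDenom a b z₁ z₂ z₃ := by
  rw [contactPoint, tangentWeight_add_tangentWeight h12 h13 h23]
  unfold tangentWeight contactDenom at *
  field_simp
  ring

lemma contactPoint_sub_right (hw : contactDenom a b z₁ z₂ z₃ ≠ 0) :
    contactPoint a b z₁ z₂ z₃ - b =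
      (z₁ - b) * (z₂ - b) * (a - z₃) / contactDenom a b z₁ z₂ z₃ := by
  rw [contactDenom_comm] at hw ⊢
  rw [contactPoint_comm, contactPoint_sub_left h12 h13 h23 hw]

end ContactPoint

lemma sub_mul_sub_eq_of_forall_cubic {K : Type*} [Field K] [CharZero K] {p q r z₁ z₂ z₃ : K}
    (h : ∀ z, z ^ 3 + p * z ^ 2 + q * z + r = (z - z₁) * (z - z₂) * (z - z₃)) :
    (z₃ - z₁) * (z₃ - z₂) = 3 * z₃ ^ 2 + 2 * p * z₃ + q := by
  linear_combination (-z₃ - 1/2) * h 1 + (-z₃ + 1/2) * h (-1) + 2 * z₃ * h 0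

lemma abs_sub_eq_of_mul_eq {x y W s t α β k : ℝ} (hα : 0 ≤ α) (hβ : β ≤ 0)
    (hx : x * W * s = |α| * k * t) (hy : y * W * t = |β| * k * s)
    (hW : W * s * t = |α * t ^ 2 + β * s ^ 2|) (hpos : 0 < W * s * t) (hk : 0 ≤ k) :
    |x - y| = k := by
  rw [abs_of_nonneg hα] at hx
  rw [abs_of_nonpos hβ] at hy
  have h : (x - y) * (W * s * t) = k * (α * t ^ 2 + β * s ^ 2) := by
    linear_combination t * hx - s * hy
  apply mul_right_cancel₀ hpos.ne'
  rw [← abs_of_pos hpos, ← abs_mul, h, abs_mul, abs_of_nonneg hk, hW, abs_abs]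

lemma Complex.norm_one_sub_conj_mul_self (a : ℂ) : ‖1 - conj a * a‖ = |1 - ‖a‖ ^ 2| := by
  rw [conj_mul', ← ofReal_pow, ← ofReal_one, ← ofReal_sub, norm_real, Real.norm_eq_abs]

section BlaschkeCubic

variable {a b lam z₁ z₂ z₃ : ℂ}
  (hP : ∀ z : ℂ, z * (z - a) * (z - b) - lam * (1 - conj a * z) * (1 - conj b * z)
    = (z - z₁) * (z - z₂) * (z - z₃))
include hP

lemma norm_sub_mul_norm_sub_mul_norm_sub (hlam : ‖lam‖ = 1) :
    ‖z₁ - a‖ * ‖z₂ - a‖ * ‖z₃ - a‖ = ‖1 - conj a * a‖ * ‖1 - conj b * a‖ := by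
  have h : (z₁ - a) * (z₂ - a) * (z₃ - a) = lam * (1 - conj a * a) * (1 - conj b * a) := by
    linear_combination hP a
  rw [← norm_mul, ← norm_mul, h, norm_mul, norm_mul, hlam, one_mul]

lemma contactDenom_eq_of_forall :
    contactDenom a b z₁ z₂ z₃ =
      z₃ * (2 * z₃ - a - b) + lam * (conj a + conj b - 2 * conj a * conj b * z₃) := by
  rw [contactDenom, sub_mul_sub_eq_of_forall_cubic (p := -(a + b + lam * conj a * conj b))
    (q := a * b + lam * (conj a + conj b)) (r := -lam) fun z => by linear_combination hP z]
  ring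

lemma contactDenom_mul_conj_mul_conj (hz₃ : ‖z₃‖ = 1) :
    contactDenom a b z₁ z₂ z₃ * conj (z₃ - a) * conj (z₃ - b) =
      (((1 - ‖a‖ ^ 2) * ‖z₃ - b‖ ^ 2 + (1 - ‖b‖ ^ 2) * ‖z₃ - a‖ ^ 2 : ℝ) : ℂ) := by
  have hu : z₃ * conj z₃ = 1 := by rw [mul_conj', hz₃]; norm_num
  have hz₃0 : z₃ ≠ 0 := by rintro rfl; simp at hz₃
  have hroot := hP z₃
  rw [sub_self, mul_zero] at hroot
  have key : contactDenom a b z₁ z₂ z₃ * (1 - conj a * z₃) * (1 - conj b * z₃) =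
      z₃ * ((1 - conj a * a) * (z₃ - b) * (1 - conj b * z₃) +
        (1 - conj b * b) * (z₃ - a) * (1 - conj a * z₃)) := by
    rw [contactDenom_eq_of_forall hP]
    linear_combination -(conj a + conj b - 2 * conj a * conj b * z₃) * hroot
  have ha : 1 - conj a * z₃ = z₃ * conj (z₃ - a) := by rw [map_sub]; linear_combination -hu
  have hb : 1 - conj b * z₃ = z₃ * conj (z₃ - b) := by rw [map_sub]; linear_combination -hu
  rw [ha, hb] at key
  apply mul_left_cancel₀ (pow_ne_zero 2 hz₃0)
  push_cast
  rw [← conj_mul' a, ← conj_mul' b, ← mul_conj' (z₃ - a), ← mul_conj' (z₃ - b)]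
  linear_combination key

lemma norm_contactDenom_mul_norm_sub_mul_norm_sub (hz₃ : ‖z₃‖ = 1) :
    ‖contactDenom a b z₁ z₂ z₃‖ * ‖z₃ - a‖ * ‖z₃ - b‖ =
      |(1 - ‖a‖ ^ 2) * ‖z₃ - b‖ ^ 2 + (1 - ‖b‖ ^ 2) * ‖z₃ - a‖ ^ 2| := by
  rw [← norm_conj (z₃ - a), ← norm_conj (z₃ - b), ← norm_mul, ← norm_mul,
    contactDenom_mul_conj_mul_conj hP hz₃, norm_real, Real.norm_eq_abs, norm_conj, norm_conj]

variable (hlam : ‖lam‖ = 1) (h12 : z₁ ≠ z₂) (h13 : z₁ ≠ z₃) (h23 : z₂ ≠ z₃)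
  (hw : contactDenom a b z₁ z₂ z₃ ≠ 0)
include hlam h12 h13 h23 hw

lemma norm_contactPoint_sub_left :
    ‖contactPoint a b z₁ z₂ z₃ - a‖ * ‖contactDenom a b z₁ z₂ z₃‖ * ‖z₃ - a‖ =
      ‖1 - conj a * a‖ * ‖1 - conj b * a‖ * ‖z₃ - b‖ := by
  rw [contactPoint_sub_left h12 h13 h23 hw, norm_div, div_mul_cancel₀ _ (norm_ne_zero_iff.2 hw),
    ← norm_sub_mul_norm_sub_mul_norm_sub hP hlam, norm_mul, norm_mul, norm_sub_rev b]
  ring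

lemma norm_contactPoint_sub_right :
    ‖contactPoint a b z₁ z₂ z₃ - b‖ * ‖contactDenom a b z₁ z₂ z₃‖ * ‖z₃ - b‖ =
      ‖1 - conj b * b‖ * ‖1 - conj a * b‖ * ‖z₃ - a‖ := by
  have hP' : ∀ z : ℂ, z * (z - b) * (z - a) - lam * (1 - conj b * z) * (1 - conj a * z)
      = (z - z₁) * (z - z₂) * (z - z₃) := fun z => by linear_combination hP z
  rw [contactDenom_comm] at hw ⊢
  rw [contactPoint_comm]
  exact norm_contactPoint_sub_left hP' hlam h12 h13 h23 hw

end BlaschkeCubic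

theorem stmt_2_general (a b lam z₁ z₂ z₃ m₁ m₂ ζ₃ : ℂ)
    (hlam : ‖lam‖ = 1)
    (h12 : z₁ ≠ z₂) (h13 : z₁ ≠ z₃) (h23 : z₂ ≠ z₃)
    (hz3 : ‖z₃‖ = 1)
    (hP : ∀ z : ℂ,
      z * (z - a) * (z - b) - lam * (1 - (starRingEnd ℂ) a * z) * (1 - (starRingEnd ℂ) b * z)
        = (z - z₁) * (z - z₂) * (z - z₃))
    (ha3 : a ≠ z₃)
    (hb3 : b ≠ z₃)
    (hm1 : m₁ = (z₁ - a) * (z₁ - b) / ((z₁ - z₂) * (z₁ - z₃)))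
    (hm2 : m₂ = (z₂ - a) * (z₂ - b) / ((z₂ - z₁) * (z₂ - z₃)))
    (hsum : m₁ + m₂ ≠ 0)
    (hζ : ζ₃ = (m₁ * z₂ + m₂ * z₁) / (m₁ + m₂))
    (ha : ‖a‖ ≤ 1) (hb : 1 < ‖b‖) :
    |‖ζ₃ - a‖ - ‖ζ₃ - b‖| = ‖1 - (starRingEnd ℂ) a * b‖ := by
  have hw : contactDenom a b z₁ z₂ z₃ ≠ 0 := by
    intro h
    apply hsum
    rw [hm1, hm2]
    exact (tangentWeight_add_tangentWeight h12 h13 h23).trans (by rw [h, zero_div])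
  have hζ' : ζ₃ = contactPoint a b z₁ z₂ z₃ := by rw [hζ, hm1, hm2]; rfl
  have hk : ‖1 - conj b * a‖ = ‖1 - conj a * b‖ := by
    rw [← norm_conj]; simp only [map_sub, map_one, map_mul, conj_conj, mul_comm]
  subst hζ'
  refine abs_sub_eq_of_mul_eq (by nlinarith [norm_nonneg a]) (by nlinarith) ?_ ?_
    (norm_contactDenom_mul_norm_sub_mul_norm_sub hP hz3) ?_ (norm_nonneg _)
  · rw [norm_contactPoint_sub_left hP hlam h12 h13 h23 hw, norm_one_sub_conj_mul_self, hk]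
  · rw [norm_contactPoint_sub_right hP hlam h12 h13 h23 hw, norm_one_sub_conj_mul_self]
  · have := sub_ne_zero.2 ha3.symm; have := sub_ne_zero.2 hb3.symm
    positivity

theorem stmt_2 (a b lam z₁ z₂ z₃ m₁ m₂ m₃ ζ₃ : ℂ)
    (hlam : ‖lam‖ = 1)
    (h12 : z₁ ≠ z₂) (h13 : z₁ ≠ z₃) (h23 : z₂ ≠ z₃)
    (hz1 : ‖z₁‖ = 1) (hz2 : ‖z₂‖ = 1) (hz3 : ‖z₃‖ = 1)
    (hP : ∀ z : ℂ,
      z * (z - a) * (z - b) - lam * (1 - (starRingEnd ℂ) a * z) * (1 - (starRingEnd ℂ) b * z)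
        = (z - z₁) * (z - z₂) * (z - z₃))
    (ha1 : a ≠ z₁) (ha2 : a ≠ z₂) (ha3 : a ≠ z₃)
    (hb1 : b ≠ z₁) (hb2 : b ≠ z₂) (hb3 : b ≠ z₃)
    (hm1 : m₁ = (z₁ - a) * (z₁ - b) / ((z₁ - z₂) * (z₁ - z₃)))
    (hm2 : m₂ = (z₂ - a) * (z₂ - b) / ((z₂ - z₁) * (z₂ - z₃)))
    (hm3 : m₃ = (z₃ - a) * (z₃ - b) / ((z₃ - z₁) * (z₃ - z₂)))
    (hsum : m₁ + m₂ ≠ 0)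
    (hζ : ζ₃ = (m₁ * z₂ + m₂ * z₁) / (m₁ + m₂))
    (ha : ‖a‖ ≤ 1) (hb : 1 < ‖b‖) :
    |‖ζ₃ - a‖ - ‖ζ₃ - b‖| = ‖1 - (starRingEnd ℂ) a * b‖ :=
  stmt_2_general a b lam z₁ z₂ z₃ m₁ m₂ ζ₃ hlam h12 h13 h23 hz3 hP ha3 hb3 hm1 hm2 hsum hζ ha hb
end

section
/- Under the stated setup, the residue m₃ = (z₃ − a)(z₃ − b)/((z₃ − z₁)(z₃ − z₂)) is a real number, i.e. its imaginary part is zero. -/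
/-!
Evaluating the factorisation at `0` gives `λ = z₁ z₂ z₃`, and at `z₃` it gives
`(z₃ - a)(z₃ - b) = z₁ z₂ (1 - ā z₃)(1 - b̄ z₃)`. On the unit circle `1 - w̄ z = z · conj (z - w)` and
`z - w = -z w · conj (z - w)`, so numerator and denominator of the residue are both of the form
`c · conj (·)` with the same `c = z₁ z₂ z₃²`; hence the residue equals its own conjugate.
-/

open Complex ComplexConjugate

theorem Complex.im_div_eq_zero_of_eq_mul_conj {N D c : ℂ} (hN : N = c * conj N)
    (hD : D = c * conj D) : (N / D).im = 0 := by
  rw [← conj_eq_iff_im, map_div₀]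
  rcases eq_or_ne c 0 with rfl | hc
  · rw [zero_mul] at hD
    simp [hD]
  · conv_rhs => rw [hN, hD]
    exact (mul_div_mul_left _ _ hc).symm

theorem Complex.one_sub_conj_mul_eq_mul_conj_sub {z : ℂ} (hz : ‖z‖ = 1) (w : ℂ) :
    1 - conj w * z = z * conj (z - w) := by
  have hz0 : z ≠ 0 := by rintro rfl; simp at hz
  rw [map_sub, ← inv_eq_conj hz]
  field_simp

theorem Complex.sub_eq_neg_mul_mul_conj_sub {u v : ℂ} (hu : ‖u‖ = 1) (hv : ‖v‖ = 1) :
    u - v = -(u * v) * conj (u - v) := by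
  have hu0 : u ≠ 0 := by rintro rfl; simp at hu
  have hv0 : v ≠ 0 := by rintro rfl; simp at hv
  rw [map_sub, ← inv_eq_conj hu, ← inv_eq_conj hv]
  field_simp
  ring

theorem stmt_4_general (a b lam z₁ z₂ z₃ : ℂ)
    (hz1 : ‖z₁‖ = 1) (hz2 : ‖z₂‖ = 1) (hz3 : ‖z₃‖ = 1)
    (hP : ∀ z : ℂ,
      z * (z - a) * (z - b) - lam * (1 - (starRingEnd ℂ) a * z) * (1 - (starRingEnd ℂ) b * z)
        = (z - z₁) * (z - z₂) * (z - z₃)) :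
    ((z₃ - a) * (z₃ - b) / ((z₃ - z₁) * (z₃ - z₂))).im = 0 := by
  have hz3₀ : z₃ ≠ 0 := by rintro rfl; simp at hz3
  have hlam : lam = z₁ * z₂ * z₃ := by linear_combination -hP 0
  have hnum : (z₃ - a) * (z₃ - b) = z₁ * z₂ * (1 - conj a * z₃) * (1 - conj b * z₃) :=
    mul_left_cancel₀ hz3₀ <| by
      linear_combination hP z₃ + hlam * (1 - conj a * z₃) * (1 - conj b * z₃)
  apply im_div_eq_zero_of_eq_mul_conj (c := z₁ * z₂ * z₃ ^ 2)
  · calc (z₃ - a) * (z₃ - b) = z₁ * z₂ * (1 - conj a * z₃) * (1 - conj b * z₃) := hnum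
      _ = z₁ * z₂ * (z₃ * conj (z₃ - a)) * (z₃ * conj (z₃ - b)) := by
        rw [one_sub_conj_mul_eq_mul_conj_sub hz3, one_sub_conj_mul_eq_mul_conj_sub hz3]
      _ = z₁ * z₂ * z₃ ^ 2 * conj ((z₃ - a) * (z₃ - b)) := by rw [map_mul]; ring
  · calc (z₃ - z₁) * (z₃ - z₂)
        = (-(z₃ * z₁) * conj (z₃ - z₁)) * (-(z₃ * z₂) * conj (z₃ - z₂)) :=
          congrArg₂ (· * ·) (sub_eq_neg_mul_mul_conj_sub hz3 hz1)
            (sub_eq_neg_mul_mul_conj_sub hz3 hz2)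
      _ = z₁ * z₂ * z₃ ^ 2 * conj ((z₃ - z₁) * (z₃ - z₂)) := by rw [map_mul]; ring

theorem stmt_4 (a b lam z₁ z₂ z₃ : ℂ)
    (hlam : ‖lam‖ = 1)
    (h12 : z₁ ≠ z₂) (h13 : z₁ ≠ z₃) (h23 : z₂ ≠ z₃)
    (hz1 : ‖z₁‖ = 1) (hz2 : ‖z₂‖ = 1) (hz3 : ‖z₃‖ = 1)
    (hP : ∀ z : ℂ,
      z * (z - a) * (z - b) - lam * (1 - (starRingEnd ℂ) a * z) * (1 - (starRingEnd ℂ) b * z)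
        = (z - z₁) * (z - z₂) * (z - z₃)) :
    ((z₃ - a) * (z₃ - b) / ((z₃ - z₁) * (z₃ - z₂))).im = 0 :=
  stmt_4_general a b lam z₁ z₂ z₃ hz1 hz2 hz3 hP
end

section
/- Under the stated setup, the equal-angles (tangency) identity holds at the contact point: (ζ₃ − a)(ζ₃ − b) = m₃ · (ζ₃ − z₁)(ζ₃ − z₂). Consequently, since m₃ is real, the line through z₁ and z₂ makes equal angles at ζ₃ with the segments joining ζ₃ to the foci a and b. -/
/-!
Expanding the monic quadratic `(z - a)(z - b)` in the Lagrange basis at the nodes `z₁, z₂, z₃`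
gives `m₁ (ζ - z₂)(ζ - z₃) + m₂ (ζ - z₁)(ζ - z₃) + m₃ (ζ - z₁)(ζ - z₂)`, and the choice of `ζ₃`
makes `m₁ (ζ₃ - z₂) + m₂ (ζ₃ - z₁)` vanish, which kills the first two terms.

The weight `m₃` is real because its numerator and denominator transform the same way under
conjugation: on the unit circle `conj (z₃ - zᵢ) = -(z₃ - zᵢ) / (z₃ zᵢ)`, and since `z₃` is a root
of `P_λ` with `λ = z₁ z₂ z₃`, also `conj ((z₃ - a)(z₃ - b)) = (z₃ - a)(z₃ - b) / (z₁ z₂ z₃²)`.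
-/

open Complex ComplexConjugate

namespace Complex

theorem ne_zero_of_norm_eq_one {z : ℂ} (hz : ‖z‖ = 1) : z ≠ 0 :=
  norm_ne_zero_iff.mp (hz ▸ one_ne_zero)

theorem im_div_eq_zero_of_conj_eq_mul {x y c : ℂ} (hx : conj x = c * x) (hy : conj y = c * y) :
    (x / y).im = 0 := by
  rw [← conj_eq_iff_im, map_div₀, hx, hy]
  rcases eq_or_ne c 0 with rfl | hc
  · rw [zero_mul, map_eq_zero_iff _ (RingHom.injective _)] at hx
    simp [hx]
  · exact mul_div_mul_left x y hc

theorem conj_sub_of_norm_eq_one {z w : ℂ} (hz : ‖z‖ = 1) (hw : ‖w‖ = 1) :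
    conj (z - w) = -(z * w)⁻¹ * (z - w) := by
  rw [map_sub, ← inv_eq_conj hz, ← inv_eq_conj hw]
  field_simp [ne_zero_of_norm_eq_one hz, ne_zero_of_norm_eq_one hw]
  ring

end Complex

section Lagrange

variable {K : Type*} [Field K]

def lagrangeWeight (a b zᵢ zⱼ zₖ : K) : K :=
  (zᵢ - a) * (zᵢ - b) / ((zᵢ - zⱼ) * (zᵢ - zₖ))

theorem sub_mul_sub_eq_lagrange {z₁ z₂ z₃ : K} (h12 : z₁ ≠ z₂) (h13 : z₁ ≠ z₃) (h23 : z₂ ≠ z₃)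
    (a b ζ : K) :
    (ζ - a) * (ζ - b) =
      lagrangeWeight a b z₁ z₂ z₃ * ((ζ - z₂) * (ζ - z₃))
        + lagrangeWeight a b z₂ z₁ z₃ * ((ζ - z₁) * (ζ - z₃))
        + lagrangeWeight a b z₃ z₁ z₂ * ((ζ - z₁) * (ζ - z₂)) := by
  unfold lagrangeWeight
  field_simp [sub_ne_zero.mpr h12, sub_ne_zero.mpr h13, sub_ne_zero.mpr h23]
  ring

theorem mul_sub_add_mul_sub_eq_zero {m₁ m₂ z₁ z₂ : K} (hsum : m₁ + m₂ ≠ 0) :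
    m₁ * ((m₁ * z₂ + m₂ * z₁) / (m₁ + m₂) - z₂) + m₂ * ((m₁ * z₂ + m₂ * z₁) / (m₁ + m₂) - z₁)
      = 0 := by
  field_simp
  ring

end Lagrange

theorem lagrangeWeight_im_eq_zero {a b z₁ z₂ z₃ : ℂ}
    (hz1 : ‖z₁‖ = 1) (hz2 : ‖z₂‖ = 1) (hz3 : ‖z₃‖ = 1)
    (hroot : z₃ * (z₃ - a) * (z₃ - b) = z₁ * z₂ * z₃ * (1 - conj a * z₃) * (1 - conj b * z₃)) :
    (lagrangeWeight a b z₃ z₁ z₂).im = 0 := by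
  have hz1' := ne_zero_of_norm_eq_one hz1
  have hz2' := ne_zero_of_norm_eq_one hz2
  have hz3' := ne_zero_of_norm_eq_one hz3
  apply im_div_eq_zero_of_conj_eq_mul (c := (z₁ * z₂ * z₃ ^ 2)⁻¹)
  · have hnum : (1 - conj a * z₃) * (1 - conj b * z₃) = (z₃ - a) * (z₃ - b) / (z₁ * z₂) := by
      rw [eq_div_iff (mul_ne_zero hz1' hz2')]
      exact mul_left_cancel₀ hz3' (by linear_combination -hroot)
    calc conj ((z₃ - a) * (z₃ - b))
        = (1 - conj a * z₃) * (1 - conj b * z₃) / z₃ ^ 2 := by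
          rw [map_mul, map_sub, map_sub, ← inv_eq_conj hz3]
          field_simp
      _ = (z₁ * z₂ * z₃ ^ 2)⁻¹ * ((z₃ - a) * (z₃ - b)) := by
          rw [hnum]
          field_simp
  · rw [map_mul, conj_sub_of_norm_eq_one hz3 hz1, conj_sub_of_norm_eq_one hz3 hz2]
    field_simp

theorem stmt_10_general (a b lam z₁ z₂ z₃ m₁ m₂ m₃ ζ₃ : ℂ)
    (h12 : z₁ ≠ z₂) (h13 : z₁ ≠ z₃) (h23 : z₂ ≠ z₃)
    (hz1 : ‖z₁‖ = 1) (hz2 : ‖z₂‖ = 1) (hz3 : ‖z₃‖ = 1)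
    (hP : ∀ z : ℂ,
      z * (z - a) * (z - b) - lam * (1 - (starRingEnd ℂ) a * z) * (1 - (starRingEnd ℂ) b * z)
        = (z - z₁) * (z - z₂) * (z - z₃))
    (hm1 : m₁ = (z₁ - a) * (z₁ - b) / ((z₁ - z₂) * (z₁ - z₃)))
    (hm2 : m₂ = (z₂ - a) * (z₂ - b) / ((z₂ - z₁) * (z₂ - z₃)))
    (hm3 : m₃ = (z₃ - a) * (z₃ - b) / ((z₃ - z₁) * (z₃ - z₂)))
    (hsum : m₁ + m₂ ≠ 0)
    (hζ : ζ₃ = (m₁ * z₂ + m₂ * z₁) / (m₁ + m₂)) :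
    (ζ₃ - a) * (ζ₃ - b) = m₃ * ((ζ₃ - z₁) * (ζ₃ - z₂)) ∧ m₃.im = 0 := by
  change m₁ = lagrangeWeight a b z₁ z₂ z₃ at hm1
  change m₂ = lagrangeWeight a b z₂ z₁ z₃ at hm2
  change m₃ = lagrangeWeight a b z₃ z₁ z₂ at hm3
  have hlam : lam = z₁ * z₂ * z₃ := by linear_combination -hP 0
  subst hlam
  have htangent : m₁ * (ζ₃ - z₂) + m₂ * (ζ₃ - z₁) = 0 := hζ ▸ mul_sub_add_mul_sub_eq_zero hsum
  constructor
  · rw [sub_mul_sub_eq_lagrange h12 h13 h23, ← hm1, ← hm2, ← hm3]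
    linear_combination (ζ₃ - z₃) * htangent
  · rw [hm3]
    exact lagrangeWeight_im_eq_zero hz1 hz2 hz3 (by linear_combination hP z₃)

theorem stmt_10 (a b lam z₁ z₂ z₃ m₁ m₂ m₃ ζ₃ : ℂ)
    (hlam : ‖lam‖ = 1)
    (h12 : z₁ ≠ z₂) (h13 : z₁ ≠ z₃) (h23 : z₂ ≠ z₃)
    (hz1 : ‖z₁‖ = 1) (hz2 : ‖z₂‖ = 1) (hz3 : ‖z₃‖ = 1)
    (hP : ∀ z : ℂ,
      z * (z - a) * (z - b) - lam * (1 - (starRingEnd ℂ) a * z) * (1 - (starRingEnd ℂ) b * z)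
        = (z - z₁) * (z - z₂) * (z - z₃))
    (hm1 : m₁ = (z₁ - a) * (z₁ - b) / ((z₁ - z₂) * (z₁ - z₃)))
    (hm2 : m₂ = (z₂ - a) * (z₂ - b) / ((z₂ - z₁) * (z₂ - z₃)))
    (hm3 : m₃ = (z₃ - a) * (z₃ - b) / ((z₃ - z₁) * (z₃ - z₂)))
    (hsum : m₁ + m₂ ≠ 0)
    (hζ : ζ₃ = (m₁ * z₂ + m₂ * z₁) / (m₁ + m₂)) :
    (ζ₃ - a) * (ζ₃ - b) = m₃ * ((ζ₃ - z₁) * (ζ₃ - z₂)) ∧ m₃.im = 0 :=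
  stmt_10_general a b lam z₁ z₂ z₃ m₁ m₂ m₃ ζ₃ h12 h13 h23 hz1 hz2 hz3 hP hm1 hm2 hm3 hsum hζ
end
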